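/- arXiv:1712.08661 — 2 statements merged into one kernel-verified Lean document; each statement's English description precedes it below -/
import Mathlib

section
/- Overwriting of repeated interventions on the same variables: let T be a recursive causal team (G(T) finite and acyclic), X ⊆ dom(T), and x, x' ∈ Ran(X). Then (T_{X=x})_{X=x'} = T_{X=x'}. -/
open scoped Classical

/-- A (pre-)causal team over variables `V` and values `A`: a team of assignments,
a set of endogenous variables, a directed graph (the edge relation), ranges for the
variables, and partial structural functions.  The function `fn Y` is given on full
assignments (it is required, via `IsCausal`, to depend only on the parents of `Y`);
`fn Y s = none` means that the invariant function for `Y` is undefined on the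
parent-values of `s`. -/
structure PreCausalTeam (V A : Type) where
  team : Set (V → A)
  endo : Set V
  edge : V → V → Prop
  ran : V → Set A
  fn : V → (V → A) → Option A

namespace PreCausalTeam

variable {V A : Type}

/-- The defining conditions of a causal team: values lie in the ranges, the structural
functions exist only for endogenous variables, depend only on the parents and take values
in the ranges, the team satisfies the functional dependence of each endogenous variable
on its parents (condition (b)), and the team complies with the structural functions
(condition (c)). -/
def IsCausal (T : PreCausalTeam V A) : Prop :=
  (∀ s ∈ T.team, ∀ X, s X ∈ T.ran X) ∧
  (∀ Y, Y ∉ T.endo → ∀ s, T.fn Y s = none) ∧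
  (∀ Y, ∀ s s' : V → A, (∀ X, T.edge X Y → s X = s' X) → T.fn Y s = T.fn Y s') ∧
  (∀ Y s a, T.fn Y s = some a → a ∈ T.ran Y) ∧
  (∀ s ∈ T.team, ∀ s' ∈ T.team, ∀ Y ∈ T.endo,
    (∀ X, T.edge X Y → s X = s' X) → s Y = s' Y) ∧
  (∀ s ∈ T.team, ∀ Y a, T.fn Y s = some a → s Y = a)

/-- A causal team is parametric if the structural function of each endogenous variable
is defined on every combination of values (from the ranges) for its parents. -/
def Parametric (T : PreCausalTeam V A) : Prop :=
  ∀ Y ∈ T.endo, ∀ s : V → A, (∀ X, T.edge X Y → s X ∈ T.ran X) → (T.fn Y s).isSome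

/-- A causal team is recursive if its graph is acyclic (no directed cycles). -/
def Recursive (T : PreCausalTeam V A) : Prop :=
  ∀ v, ¬ Relation.TransGen T.edge v v

/-- The causal (sub)team obtained by replacing the team component (graph, ranges and
functions are kept). -/
def withTeam (T : PreCausalTeam V A) (S : Set (V → A)) : PreCausalTeam V A :=
  { T with team := S }

/-- The effect of the intervention `do(X = x)` on a single assignment `s` of a
recursive causal team: the variables in `X` are set to the prescribed values, and the
descendants of `X` are updated (in order of evaluation distance) using the structural
functions; variables whose structural function is undefined at the new parent values
keep their old value.  (Defined by well-founded recursion along the acyclic graph.) -/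
noncomputable def doAssign (T : PreCausalTeam V A) (X : Set V) (x : V → A)
    (s : V → A) : V → A :=
  if h : WellFounded T.edge then
    WellFounded.fix (C := fun _ => A) h fun W ih =>
      if W ∈ X then x W
      else (T.fn W fun P => if hp : T.edge P W then ih P hp else s P).getD (s W)
  else s

/-- The intervened causal team `T_{X=x}`: all arrows into `X` are deleted, the variables
of `X` become exogenous (their structural functions are removed), and every assignment
of the team is updated by the intervention algorithm. -/
noncomputable def doTeam (T : PreCausalTeam V A) (X : Set V) (x : V → A) :
    PreCausalTeam V A where
  team := T.doAssign X x '' T.team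
  endo := T.endo \ X
  edge := fun a b => T.edge a b ∧ b ∉ X
  ran := T.ran
  fn := fun W s => if W ∈ X then none else T.fn W s

theorem doAssign_spec (T : PreCausalTeam V A) (h : WellFounded T.edge)
    (X : Set V) (x s : V → A) (W : V) :
    T.doAssign X x s W =
      if W ∈ X then x W
      else (T.fn W fun P => if T.edge P W then T.doAssign X x s P else s P).getD (s W) := by
  conv_lhs => rw [doAssign, dif_pos h, WellFounded.fix_eq]
  by_cases hW : W ∈ X
  · simp [hW]
  · simp only [hW, if_false]
    congr 2
    funext P
    by_cases hp : T.edge P W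
    · simp [hp, doAssign, dif_pos h]
    · simp [hp]

theorem doAssign_mem_ran (T : PreCausalTeam V A) (hcau : T.IsCausal)
    (h : WellFounded T.edge) (X : Set V) (x s : V → A)
    (hx : ∀ v ∈ X, x v ∈ T.ran v) (hs : ∀ v, s v ∈ T.ran v) :
    ∀ W, T.doAssign X x s W ∈ T.ran W := by
  intro W
  induction W using h.induction with
  | _ W ih =>
    rw [T.doAssign_spec h]
    split
    · exact hx W ‹_›
    · cases hfn : T.fn W (fun P => if T.edge P W then T.doAssign X x s P else s P) with
      | none => simpa using hs W
      | some a => simpa using hcau.2.2.2.1 W _ a hfn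

theorem doAssign_overwrite (T : PreCausalTeam V A) (hcau : T.IsCausal)
    (hpar : T.Parametric) (h : WellFounded T.edge) (X : Set V) (x x' s : V → A)
    (hx : ∀ v ∈ X, x v ∈ T.ran v) (hx' : ∀ v ∈ X, x' v ∈ T.ran v)
    (hs : ∀ v, s v ∈ T.ran v) :
    ∀ W, (T.doTeam X x).doAssign X x' (T.doAssign X x s) W = T.doAssign X x' s W := by
  obtain ⟨h1, h2, h3, h4, h5, h6⟩ := hcau
  have hwf' : WellFounded (T.doTeam X x).edge := Subrelation.wf (fun hab => hab.1) h
  intro W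
  induction W using h.induction with
  | _ W ih =>
    rw [(T.doTeam X x).doAssign_spec hwf', T.doAssign_spec h (x := x')]
    by_cases hW : W ∈ X
    · simp [hW]
    · simp only [hW, if_false]
      set g : V → A := T.doAssign X x s with hg
      set q : V → A := fun P => if T.edge P W then T.doAssign X x' s P else s P with hq
      set p : V → A := fun P =>
        if (T.doTeam X x).edge P W then (T.doTeam X x).doAssign X x' g P else g P with hp
      have hfneq : (T.doTeam X x).fn W p = T.fn W q := by
        have : T.fn W p = T.fn W q := by
          refine h3 W p q fun P hP => ?_
          simp only [hp, hq, doTeam, hP, hW, if_pos, not_false_iff, and_true, if_true]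
          exact ih P hP
        simpa [doTeam, hW] using this
      rw [hfneq]
      cases hfn : T.fn W q with
      | some a => simp [hfn]
      | none =>
        by_cases hWe : W ∈ T.endo
        · exfalso
          have hqr : ∀ P, T.edge P W → q P ∈ T.ran P := by
            intro P hP
            simp only [hq, hP, if_true]
            exact T.doAssign_mem_ran ⟨h1, h2, h3, h4, h5, h6⟩ h X x' s hx' hs P
          have := hpar W hWe q hqr
          rw [hfn] at this
          simp at this
        · have hgW : g W = s W := by
            rw [hg, T.doAssign_spec h, if_neg hW, h2 W hWe]
            rfl
          simp [h2 W hWe, hgW]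

end PreCausalTeam

/-- Overwriting of repeated interventions on the same variables: for a
(parametric, recursive) causal team `T` with finite acyclic graph, `X ⊆ dom(T)` and
values `x, x' ∈ Ran(X)`, one has `(T_{X=x})_{X=x'} = T_{X=x'}`. -/
theorem intervene_overwrite {V A : Type} [Fintype V]
    (T : PreCausalTeam V A)
    (hcau : T.IsCausal) (hpar : T.Parametric) (hrec : T.Recursive)
    (X : Set V) (x x' : V → A)
    (hx : ∀ v ∈ X, x v ∈ T.ran v) (hx' : ∀ v ∈ X, x' v ∈ T.ran v) :
    (T.doTeam X x).doTeam X x' = T.doTeam X x' := by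
  have hwfTG : WellFounded (Relation.TransGen T.edge) := by
    have : IsIrrefl V (Relation.TransGen T.edge) := ⟨hrec⟩
    exact Finite.wellFounded_of_trans_of_irrefl _
  have hwf : WellFounded T.edge :=
    Subrelation.wf (fun {a b} hab => Relation.TransGen.single hab) hwfTG
  have hext : ∀ (a b : PreCausalTeam V A), a.team = b.team → a.endo = b.endo →
      a.edge = b.edge → a.ran = b.ran → a.fn = b.fn → a = b := by
    rintro ⟨⟩ ⟨⟩ rfl rfl rfl rfl rfl; rfl
  apply hext
  · show (T.doTeam X x).doAssign X x' '' (T.doAssign X x '' T.team)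
      = T.doAssign X x' '' T.team
    rw [Set.image_image]
    refine Set.image_congr fun s hs => ?_
    funext W
    exact PreCausalTeam.doAssign_overwrite T hcau hpar hwf X x x' s hx hx'
      (fun v => hcau.1 s hs v) W
  · show (T.endo \ X) \ X = T.endo \ X
    simp [Set.diff_diff]
  · show (fun a b => (T.edge a b ∧ b ∉ X) ∧ b ∉ X) = fun a b => T.edge a b ∧ b ∉ X
    funext a b
    exact propext (by tauto)
  · rfl
  · show (fun W s => if W ∈ X then none
        else if W ∈ X then none else T.fn W s) = fun W s => if W ∈ X then none else T.fn W s
    funext W s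
    by_cases hW : W ∈ X <;> simp [hW]
end

section
/- Soundness of composition and uniqueness rules: for every parametric recursive causal team T the following hold. (CE) If T ⊨ X=x □→ W=w and T ⊨ (X=x ∧ W=w) □→ Y=y, then T ⊨ X=x □→ Y=y. (CI) If T ⊨ X=x □→ W=w and T ⊨ X=x □→ Y=y, then T ⊨ (X=x ∧ W=w) □→ Y=y. (UNI) If x ≠ x' are values in Ran(X) and T ⊨ Y=y □→ X=x, then T ⊨ Y=y □→ X≠x'. -/
open scoped Classical

/-- Classical formulas: Boolean combinations of atoms `Y = y` and `Y ≠ y`. -/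
inductive ClForm (V A : Type) where
  | eq : V → A → ClForm V A
  | neq : V → A → ClForm V A
  | conj : ClForm V A → ClForm V A → ClForm V A
  | disj : ClForm V A → ClForm V A → ClForm V A

/-- Tarskian satisfaction of a classical formula by a single assignment. -/
def ClForm.sat {V A : Type} (s : V → A) : ClForm V A → Prop
  | .eq Y a => s Y = a
  | .neq Y a => s Y ≠ a
  | .conj φ ψ => ClForm.sat s φ ∧ ClForm.sat s ψ
  | .disj φ ψ => ClForm.sat s φ ∨ ClForm.sat s ψ

/-- Formulas of the language `CD`: atoms `Y = y`, `Y ≠ y`, dependence atoms `=(X; Y)`,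
conjunction, (tensor) disjunction, selective implication `θ ⊃ χ` (with classical
antecedent) and interventionist counterfactual `X = x □→ χ`. -/
inductive CDForm (V A : Type) where
  | eq : V → A → CDForm V A
  | neq : V → A → CDForm V A
  | dep : Set V → V → CDForm V A
  | conj : CDForm V A → CDForm V A → CDForm V A
  | disj : CDForm V A → CDForm V A → CDForm V A
  | selimp : ClForm V A → CDForm V A → CDForm V A
  | cf : Set V → (V → A) → CDForm V A → CDForm V A

/-- Team satisfaction for `CD` formulas over causal teams. -/
def CDForm.sat {V A : Type} : CDForm V A → PreCausalTeam V A → Prop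
  | .eq Y a, T => ∀ s ∈ T.team, s Y = a
  | .neq Y a, T => ∀ s ∈ T.team, s Y ≠ a
  | .dep Xs Y, T => ∀ s ∈ T.team, ∀ s' ∈ T.team,
      (∀ X ∈ Xs, s X = s' X) → s Y = s' Y
  | .conj φ ψ, T => CDForm.sat φ T ∧ CDForm.sat ψ T
  | .disj φ ψ, T => ∃ S₁ S₂ : Set (V → A), S₁ ∪ S₂ = T.team ∧
      CDForm.sat φ (T.withTeam S₁) ∧ CDForm.sat ψ (T.withTeam S₂)
  | .selimp θ χ, T => CDForm.sat χ (T.withTeam {s | s ∈ T.team ∧ ClForm.sat s θ})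
  | .cf X x χ, T => CDForm.sat χ (T.doTeam X x)

namespace PreCausalTeam

theorem wf_of_recursive {V A : Type} [Fintype V] (T : PreCausalTeam V A)
    (hrec : T.Recursive) : WellFounded T.edge := by
  have htg : WellFounded (Relation.TransGen T.edge) := by
    haveI : IsTrans V (Relation.TransGen T.edge) :=
      ⟨fun _ _ _ => Relation.TransGen.trans⟩
    haveI : IsIrrefl V (Relation.TransGen T.edge) := ⟨hrec⟩
    exact Finite.wellFounded_of_trans_of_irrefl _
  exact Subrelation.wf (fun h => Relation.TransGen.single h) htg

theorem doAssign_eq {V A : Type} (T : PreCausalTeam V A) (h : WellFounded T.edge)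
    (X : Set V) (x : V → A) (s : V → A) (Z : V) :
    T.doAssign X x s Z =
      if Z ∈ X then x Z
      else (T.fn Z fun P => if T.edge P Z then T.doAssign X x s P else s P).getD (s Z) := by
  conv_lhs => rw [doAssign, dif_pos h, WellFounded.fix_eq]
  by_cases hZ : Z ∈ X
  · simp [hZ]
  · simp only [hZ, if_false]
    congr 2
    funext P
    split_ifs with hp
    · rw [doAssign, dif_pos h]
    · rfl

theorem doAssign_comp {V A : Type} (T : PreCausalTeam V A) (h : WellFounded T.edge)
    (X : Set V) (x : V → A) (W : V) (w : A) (s : V → A)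
    (hw : T.doAssign X x s W = w) :
    T.doAssign (insert W X) (Function.update x W w) s = T.doAssign X x s := by
  funext Z
  induction Z using WellFounded.induction h with
  | _ Z ih =>
  rw [doAssign_eq T h, doAssign_eq T h]
  by_cases hZX : Z ∈ X
  · rw [if_pos (Set.mem_insert_of_mem _ hZX), if_pos hZX]
    by_cases hZW : Z = W
    · subst hZW
      rw [Function.update_self]
      rw [doAssign_eq T h, if_pos hZX] at hw
      exact hw.symm
    · rw [Function.update_of_ne hZW]
  · by_cases hZW : Z = W
    · subst hZW
      rw [if_pos (Set.mem_insert _ _), Function.update_self, if_neg hZX]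
      rw [doAssign_eq T h, if_neg hZX] at hw
      exact hw.symm
    · have hni : Z ∉ insert W X := by
        simp [Set.mem_insert_iff, hZW, hZX]
      rw [if_neg hni, if_neg hZX]
      congr 2
      funext P
      by_cases hp : T.edge P Z
      · simp [hp, ih P hp]
      · simp [hp]

end PreCausalTeam

/-- Soundness of the composition and uniqueness rules over parametric
recursive causal teams:
(CE) from `X=x □→ W=w` and `(X=x ∧ W=w) □→ Y=y` infer `X=x □→ Y=y`;
(CI) from `X=x □→ W=w` and `X=x □→ Y=y` infer `(X=x ∧ W=w) □→ Y=y`;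
(UNI) if `x ≠ x'` are values in `Ran(X)`, from `Y=y □→ X=x` infer `Y=y □→ X≠x'`.
The conjunctive antecedent `X=x ∧ W=w` is the intervention on `insert W X` with the
values of `x` overridden by `w` at `W`. -/
theorem composition_uniqueness_sound {V A : Type} [Fintype V]
    (T : PreCausalTeam V A)
    (hcau : T.IsCausal) (hpar : T.Parametric) (hrec : T.Recursive) :
    (∀ (X : Set V) (x : V → A) (W : V) (w : A) (Y : V) (y : A),
      (∀ v ∈ X, x v ∈ T.ran v) → w ∈ T.ran W →
      CDForm.sat (CDForm.cf X x (CDForm.eq W w)) T →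
      CDForm.sat (CDForm.cf (insert W X) (Function.update x W w) (CDForm.eq Y y)) T →
      CDForm.sat (CDForm.cf X x (CDForm.eq Y y)) T) ∧
    (∀ (X : Set V) (x : V → A) (W : V) (w : A) (Y : V) (y : A),
      (∀ v ∈ X, x v ∈ T.ran v) → w ∈ T.ran W →
      CDForm.sat (CDForm.cf X x (CDForm.eq W w)) T →
      CDForm.sat (CDForm.cf X x (CDForm.eq Y y)) T →
      CDForm.sat (CDForm.cf (insert W X) (Function.update x W w) (CDForm.eq Y y)) T) ∧
    (∀ (Ys : Set V) (yv : V → A) (X : V) (x x' : A),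
      (∀ v ∈ Ys, yv v ∈ T.ran v) → x ∈ T.ran X → x' ∈ T.ran X → x ≠ x' →
      CDForm.sat (CDForm.cf Ys yv (CDForm.eq X x)) T →
      CDForm.sat (CDForm.cf Ys yv (CDForm.neq X x')) T) := by
  have hwf : WellFounded T.edge := T.wf_of_recursive hrec
  refine ⟨?_, ?_, ?_⟩
  · intro X x W w Y y _ _ h1 h2 t ht
    obtain ⟨s, hs, rfl⟩ := ht
    have hWs : T.doAssign X x s W = w := h1 _ ⟨s, hs, rfl⟩
    rw [← T.doAssign_comp hwf X x W w s hWs]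
    exact h2 _ ⟨s, hs, rfl⟩
  · intro X x W w Y y _ _ h1 h2 t ht
    obtain ⟨s, hs, rfl⟩ := ht
    have hWs : T.doAssign X x s W = w := h1 _ ⟨s, hs, rfl⟩
    rw [T.doAssign_comp hwf X x W w s hWs]
    exact h2 _ ⟨s, hs, rfl⟩
  · intro Ys yv X x x' _ _ _ hne h1 t ht hx'
    exact hne ((h1 t ht).symm.trans hx')
end
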